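/- arXiv:2501.04224 — 4 statements merged into one kernel-verified Lean document; each statement's English description precedes it below -/
import Mathlib

section
/- Let G and H be similar relational structures and let π be an automorphism of H of prime order p. Then the number of homomorphisms from G to H is congruent modulo p to the number of homomorphisms from G to the substructure H^π of H induced by the fixed points of π. -/
/-!
Composition with `π` permutes the homomorphisms `G → H`, and its `p`-th power is the identity, so
all its orbits have size `1` or `p`. The homomorphisms it fixes are exactly those with image inside
`Fix(π)`, i.e. the homomorphisms `G → H^π`.
-/

namespace RelStructure

variable {σ G H : Type*} {ar : σ → ℕ}

def IsHom (relG : ∀ s, (Fin (ar s) → G) → Prop) (relH : ∀ s, (Fin (ar s) → H) → Prop)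
    (f : G → H) : Prop :=
  ∀ s t, relG s t → relH s (f ∘ t)

def induced (relH : ∀ s, (Fin (ar s) → H) → Prop) (S : Set H) :
    ∀ s, (Fin (ar s) → S) → Prop :=
  fun s t => relH s (Subtype.val ∘ t)

abbrev Hom (relG : ∀ s, (Fin (ar s) → G) → Prop) (relH : ∀ s, (Fin (ar s) → H) → Prop) :=
  {f : G → H // IsHom relG relH f}

variable {relG : ∀ s, (Fin (ar s) → G) → Prop} {relH : ∀ s, (Fin (ar s) → H) → Prop}

theorem IsHom.comp {g : H → H} (hg : IsHom relH relH g) {f : G → H} (hf : IsHom relG relH f) :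
    IsHom relG relH (g ∘ f) :=
  fun s t ht => hg s _ (hf s t ht)

def postcomp (g : H → H) (hg : IsHom relH relH g) : Function.End (Hom relG relH) :=
  fun f => ⟨g ∘ f.1, hg.comp f.2⟩

theorem postcomp_pow_apply (g : H → H) (hg : IsHom relH relH g) (n : ℕ) (f : Hom relG relH) :
    ((postcomp g hg ^ n) f).1 = g^[n] ∘ f.1 := by
  induction n with
  | zero => rfl
  | succ n ih =>
    rw [pow_succ', Function.iterate_succ', Function.comp_assoc, ← ih]
    rfl

theorem postcomp_pow_eq_one {g : H → H} (hg : IsHom relH relH g) {n : ℕ} (hgn : g^[n] = id) :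
    postcomp (relG := relG) g hg ^ n = 1 := by
  funext f
  exact Subtype.ext ((postcomp_pow_apply g hg n f).trans (by rw [hgn]; rfl))

def fixedPointsPostcompEquiv (g : H → H) (hg : IsHom relH relH g) :
    (postcomp (relG := relG) g hg).fixedPoints ≃
      Hom relG (induced relH (Function.fixedPoints g)) where
  toFun f := ⟨fun x => ⟨f.1.1 x, congrFun (congrArg Subtype.val f.2) x⟩, f.1.2⟩
  invFun f := ⟨⟨Subtype.val ∘ f.1, f.2⟩, Subtype.ext (funext fun x => (f.1 x).2)⟩
  left_inv _ := rfl
  right_inv _ := rfl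

theorem card_hom_modEq_card_hom_fixedPoints [Finite G] [Finite H] {p n : ℕ} [Fact p.Prime]
    {g : H → H} (hg : IsHom relH relH g) (hgp : g^[p ^ n] = id) :
    Nat.card (Hom relG relH) ≡
      Nat.card (Hom relG (induced relH (Function.fixedPoints g))) [MOD p] := by
  classical
  have := Fintype.ofFinite (Hom relG relH)
  rw [← Nat.card_congr (fixedPointsPostcompEquiv g hg)]
  simpa only [← Nat.card_eq_fintype_card] using
    Equiv.Perm.card_fixedPoints_modEq (postcomp_pow_eq_one (relG := relG) hg hgp)

end RelStructure

/-- If `π` is an automorphism of order `p` (`p` prime) of a relational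
structure `H`, then for any similar structure `G` the number of homomorphisms
`G → H` is congruent mod `p` to the number of homomorphisms from `G` into the
substructure of `H` induced by the fixed points of `π`. -/
theorem modular_reduction_by_automorphism
    (σ : Type) (ar : σ → ℕ)
    (G H : Type) [Fintype G] [Fintype H]
    (relG : ∀ s : σ, (Fin (ar s) → G) → Prop)
    (relH : ∀ s : σ, (Fin (ar s) → H) → Prop)
    (p : ℕ) (hp : p.Prime)
    (π : Equiv.Perm H)
    (hπaut : ∀ s t, relH s t ↔ relH s (⇑π ∘ t))
    (hπord : orderOf π = p) :
    Nat.card {f : G → H // ∀ s t, relG s t → relH s (f ∘ t)} ≡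
      Nat.card {f : G → {a : H // π a = a} //
        ∀ s t, relG s t → relH s (fun i => ((f (t i) : {a : H // π a = a}) : H))}
      [MOD p] := by
  have : Fact p.Prime := ⟨hp⟩
  have hπp : (⇑π)^[p ^ 1] = id := by
    rw [pow_one, ← Equiv.Perm.coe_pow, ← hπord, pow_orderOf_eq_one, Equiv.Perm.coe_one]
  exact RelStructure.card_hom_modEq_card_hom_fixedPoints (relG := relG)
    (fun s t => (hπaut s t).mp) hπp
end

section
/- Suppose a relational structure H is congruence p-permutable. Then H is strongly p-rectangular: every p-mpp-definable relation R ⊆ H^r × H^s satisfies that (a,b),(a,d),(c,d) ∈ R implies (c,b) ∈ R. -/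
/-- The relations `p`-mpp-definable in a relational structure with carrier `H`,
signature `σ` (arities `ar`, interpretations `rel`): atoms of the structure,
equality atoms, substitution of variables, conjunction, and the `p`-modular
existential quantifier (quantifying away a group of variables and requiring
a number of extensions not divisible by `p`). -/
inductive Mpp (H : Type) (σ : Type) (ar : σ → ℕ)
    (rel : ∀ s : σ, (Fin (ar s) → H) → Prop) (p : ℕ) :
    ∀ n : ℕ, ((Fin n → H) → Prop) → Prop
  | atom (s : σ) (n : ℕ) (v : Fin (ar s) → Fin n) :
      Mpp H σ ar rel p n (fun t => rel s (t ∘ v))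
  | eq (n : ℕ) (i j : Fin n) :
      Mpp H σ ar rel p n (fun t => t i = t j)
  | subst (n m : ℕ) (v : Fin n → Fin m) (P : (Fin n → H) → Prop) :
      Mpp H σ ar rel p n P → Mpp H σ ar rel p m (fun t => P (t ∘ v))
  | and (n : ℕ) (P Q : (Fin n → H) → Prop) :
      Mpp H σ ar rel p n P → Mpp H σ ar rel p n Q →
      Mpp H σ ar rel p n (fun t => P t ∧ Q t)
  | mquant (n m : ℕ) (P : (Fin (n + m) → H) → Prop) :
      Mpp H σ ar rel p (n + m) P →
      Mpp H σ ar rel p n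
        (fun t => ¬ p ∣ Nat.card {u : Fin m → H // P (Fin.append t u)})

/-- `α` (a `2n`-ary relation, viewed as a binary relation on `n`-tuples) is a
congruence of the `n`-ary relation `R`: an equivalence relation on `R`. -/
def IsCong {H : Type} {n : ℕ} (R : (Fin n → H) → Prop)
    (α : (Fin (n + n) → H) → Prop) : Prop :=
  (∀ x y : Fin n → H, α (Fin.append x y) → R x ∧ R y) ∧
  (∀ x : Fin n → H, R x → α (Fin.append x x)) ∧
  (∀ x y : Fin n → H, α (Fin.append x y) → α (Fin.append y x)) ∧
  (∀ x y z : Fin n → H, α (Fin.append x y) → α (Fin.append y z) → α (Fin.append x z))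


lemma mpp_of_eq {H σ : Type} {ar : σ → ℕ} {rel : ∀ s : σ, (Fin (ar s) → H) → Prop}
    {p n : ℕ} {P Q : (Fin n → H) → Prop}
    (h : Mpp H σ ar rel p n P) (e : P = Q) : Mpp H σ ar rel p n Q := e ▸ h

lemma mpp_forall_eq {H σ : Type} {ar : σ → ℕ} {rel : ∀ s : σ, (Fin (ar s) → H) → Prop}
    {p : ℕ} (m : ℕ) [NeZero m] :
    ∀ (k : ℕ) (f g : Fin k → Fin m),
      Mpp H σ ar rel p m (fun t => ∀ i, t (f i) = t (g i))
  | 0, f, g => by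
      refine mpp_of_eq (Mpp.eq m 0 0) ?_
      funext t
      apply propext
      exact ⟨fun _ i => i.elim0, fun _ => rfl⟩
  | (k+1), f, g => by
      refine mpp_of_eq (Mpp.and m _ _ (Mpp.eq m (f 0) (g 0))
        (mpp_forall_eq m k (f ∘ Fin.succ) (g ∘ Fin.succ))) ?_
      funext t
      apply propext
      rw [Fin.forall_fin_succ]
      rfl

/-- if a relational structure is congruence `p`-permutable (the
`p`-modular products of any two `p`-mpp-definable `p`-congruences of any
`p`-mpp-definable relation coincide in both orders), then it is strongly
`p`-rectangular: every `p`-mpp-definable relation `R ⊆ H^r × H^s` satisfies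
`(a,b),(a,d),(c,d) ∈ R → (c,b) ∈ R`. -/
theorem p_permutable_implies_strongly_p_rectangular
    (H : Type) [Fintype H] (σ : Type) (ar : σ → ℕ)
    (rel : ∀ s : σ, (Fin (ar s) → H) → Prop) (p : ℕ) (hp : p.Prime)
    (hperm : ∀ (n : ℕ) (R : (Fin n → H) → Prop), Mpp H σ ar rel p n R →
      ∀ α β : (Fin (n + n) → H) → Prop,
        Mpp H σ ar rel p (n + n) α → Mpp H σ ar rel p (n + n) β →
        IsCong R α → IsCong R β →
        ∀ a b : Fin n → H,
          (¬ p ∣ Nat.card {c : Fin n → H // α (Fin.append a c) ∧ β (Fin.append c b)}) ↔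
          (¬ p ∣ Nat.card {c : Fin n → H // β (Fin.append a c) ∧ α (Fin.append c b)}))
    (r s : ℕ) (R : (Fin (r + s) → H) → Prop)
    (hR : Mpp H σ ar rel p (r + s) R)
    (a c : Fin r → H) (b d : Fin s → H)
    (hab : R (Fin.append a b)) (had : R (Fin.append a d)) (hcd : R (Fin.append c d)) :
    R (Fin.append c b) := by
  by_cases h0 : r + s = 0
  · have hc : Fin.append c b = Fin.append a b := funext fun i => absurd i.isLt (by omega)
    rw [hc]; exact hab
  · haveI : NeZero (r + s + (r + s)) := ⟨by omega⟩
    set L : Fin (r+s) → Fin (r+s + (r+s)) := Fin.castAdd (r+s) with hLdef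
    set Rr : Fin (r+s) → Fin (r+s + (r+s)) := Fin.natAdd (r+s) with hRrdef
    set α : (Fin (r+s + (r+s)) → H) → Prop := fun t =>
      (R (t ∘ L) ∧ R (t ∘ Rr)) ∧
        ∀ i : Fin r, t (L (Fin.castAdd s i)) = t (Rr (Fin.castAdd s i)) with hαdef
    set β : (Fin (r+s + (r+s)) → H) → Prop := fun t =>
      (R (t ∘ L) ∧ R (t ∘ Rr)) ∧
        ∀ j : Fin s, t (L (Fin.natAdd r j)) = t (Rr (Fin.natAdd r j)) with hβdef
    have hα : Mpp H σ ar rel p (r+s + (r+s)) α :=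
      Mpp.and _ _ _ (Mpp.and _ _ _ (Mpp.subst _ _ L R hR) (Mpp.subst _ _ Rr R hR))
        (mpp_forall_eq _ r (fun i => L (Fin.castAdd s i)) (fun i => Rr (Fin.castAdd s i)))
    have hβ : Mpp H σ ar rel p (r+s + (r+s)) β :=
      Mpp.and _ _ _ (Mpp.and _ _ _ (Mpp.subst _ _ L R hR) (Mpp.subst _ _ Rr R hR))
        (mpp_forall_eq _ s (fun j => L (Fin.natAdd r j)) (fun j => Rr (Fin.natAdd r j)))
    have hαc : ∀ x y : Fin (r+s) → H, α (Fin.append x y) ↔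
        (R x ∧ R y) ∧ ∀ i : Fin r, x (Fin.castAdd s i) = y (Fin.castAdd s i) := by
      intro x y
      simp only [hαdef, hLdef, hRrdef, Function.comp_def, Fin.append_left, Fin.append_right]
    have hβc : ∀ x y : Fin (r+s) → H, β (Fin.append x y) ↔
        (R x ∧ R y) ∧ ∀ j : Fin s, x (Fin.natAdd r j) = y (Fin.natAdd r j) := by
      intro x y
      simp only [hβdef, hLdef, hRrdef, Function.comp_def, Fin.append_left, Fin.append_right]
    have hIα : IsCong R α := by
      refine ⟨fun x y h => ((hαc x y).1 h).1,
        fun x hx => (hαc x x).2 ⟨⟨hx, hx⟩, fun _ => rfl⟩,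
        fun x y h => ?_, fun x y z hxy hyz => ?_⟩
      · obtain ⟨⟨h1, h2⟩, h3⟩ := (hαc x y).1 h
        exact (hαc y x).2 ⟨⟨h2, h1⟩, fun i => (h3 i).symm⟩
      · obtain ⟨⟨h1, h2⟩, h3⟩ := (hαc x y).1 hxy
        obtain ⟨⟨h4, h5⟩, h6⟩ := (hαc y z).1 hyz
        exact (hαc x z).2 ⟨⟨h1, h5⟩, fun i => (h3 i).trans (h6 i)⟩
    have hIβ : IsCong R β := by
      refine ⟨fun x y h => ((hβc x y).1 h).1,
        fun x hx => (hβc x x).2 ⟨⟨hx, hx⟩, fun _ => rfl⟩,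
        fun x y h => ?_, fun x y z hxy hyz => ?_⟩
      · obtain ⟨⟨h1, h2⟩, h3⟩ := (hβc x y).1 h
        exact (hβc y x).2 ⟨⟨h2, h1⟩, fun j => (h3 j).symm⟩
      · obtain ⟨⟨h1, h2⟩, h3⟩ := (hβc x y).1 hxy
        obtain ⟨⟨h4, h5⟩, h6⟩ := (hβc y z).1 hyz
        exact (hβc x z).2 ⟨⟨h1, h5⟩, fun j => (h3 j).trans (h6 j)⟩
    have heta : ∀ (e : Fin (r+s) → H) (u : Fin r → H) (v : Fin s → H),
        (∀ i, e (Fin.castAdd s i) = u i) → (∀ j, e (Fin.natAdd r j) = v j) →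
        e = Fin.append u v := by
      intro e u v h1 h2
      funext x
      refine Fin.addCases (fun i => ?_) (fun j => ?_) x
      · rw [Fin.append_left]; exact h1 i
      · rw [Fin.append_right]; exact h2 j
    have key := hperm (r+s) R hR α β hα hβ hIα hIβ (Fin.append a b) (Fin.append c d)
    have h1 : Nat.card {e : Fin (r+s) → H //
        α (Fin.append (Fin.append a b) e) ∧ β (Fin.append e (Fin.append c d))} = 1 := by
      rw [Nat.card_eq_one_iff_unique]
      constructor
      · constructor
        rintro ⟨x, hx1, hx2⟩ ⟨y, hy1, hy2⟩
        have hx := heta x a d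
          (fun i => ((((hαc _ _).1 hx1).2 i).symm.trans (Fin.append_left a b _)))
          (fun j => (((hβc _ _).1 hx2).2 j).trans (Fin.append_right c d _))
        have hy := heta y a d
          (fun i => ((((hαc _ _).1 hy1).2 i).symm.trans (Fin.append_left a b _)))
          (fun j => (((hβc _ _).1 hy2).2 j).trans (Fin.append_right c d _))
        exact Subtype.ext (hx.trans hy.symm)
      · refine ⟨⟨Fin.append a d, (hαc _ _).2 ⟨⟨hab, had⟩, fun i => ?_⟩,
          (hβc _ _).2 ⟨⟨had, hcd⟩, fun j => ?_⟩⟩⟩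
        · rw [Fin.append_left, Fin.append_left]
        · rw [Fin.append_right, Fin.append_right]
    have h2 := key.mp (by rw [h1]; exact hp.not_dvd_one)
    have hne : Nonempty {e : Fin (r+s) → H //
        β (Fin.append (Fin.append a b) e) ∧ α (Fin.append e (Fin.append c d))} := by
      by_contra hne
      rw [not_nonempty_iff] at hne
      exact h2 (by rw [Nat.card_of_isEmpty]; exact dvd_zero p)
    obtain ⟨e, he1, he2⟩ := hne
    have heq : e = Fin.append c b := heta e c b
      (fun i => (((hαc _ _).1 he2).2 i).trans (Fin.append_left c d _))
      (fun j => ((((hβc _ _).1 he1).2 j).symm.trans (Fin.append_right a b _)))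
    have := ((hβc _ _).1 he1).1.2
    rwa [heq] at this
end

section
/- Let G and H be similar finite relational structures, each p-rigid (no automorphism of order p), such that for every similar structure K, hom(K,G) ≡ hom(K,H) (mod p). Then G and H are isomorphic. -/
/-!
Sort the homomorphisms `K → G` by their kernel `θ`: those with kernel `θ` are the injective
homomorphisms out of the quotient structure `K/θ`, so `hom(K, G) = ∑_θ inj(K/θ, G)`.
Each `θ ≠ ⊥` gives a strictly smaller structure and the `θ = ⊥` term is `inj(K, G)`, so
induction on `|K|` turns the hypothesis into `inj(K, G) ≡ inj(K, H) (mod p)` for every `K`.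
For `K = G` the left side is `|Aut G|`, which `p` does not divide by Cauchy's theorem; hence
there is an injective homomorphism `G → H`, and symmetrically one `H → G`. Such a pair is an
isomorphism, since an injective endomorphism of a finite structure reflects every relation.
-/

open Function

variable {σ : Type*} {ar : σ → ℕ} {K G H : Type*}

def IsHom (relK : ∀ s : σ, (Fin (ar s) → K) → Prop)
    (relG : ∀ s : σ, (Fin (ar s) → G) → Prop) (f : K → G) : Prop :=
  ∀ s t, relK s t → relG s (f ∘ t)

theorem IsHom.comp {relK : ∀ s : σ, (Fin (ar s) → K) → Prop}
    {relG : ∀ s : σ, (Fin (ar s) → G) → Prop} {relH : ∀ s : σ, (Fin (ar s) → H) → Prop}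
    {f : K → G} {g : G → H} (hg : IsHom relG relH g) (hf : IsHom relK relG f) :
    IsHom relK relH (g ∘ f) :=
  fun s t h => hg s (f ∘ t) (hf s t h)

theorem IsHom.rel_iff_of_injective [Finite G] {relG : ∀ s : σ, (Fin (ar s) → G) → Prop}
    {f : G → G} (hf : IsHom relG relG f) (hinj : Injective f) (s : σ) (t : Fin (ar s) → G) :
    relG s (f ∘ t) ↔ relG s t := by
  refine ⟨fun h => ?_, hf s t⟩
  let R : Set (Fin (ar s) → G) := {t | relG s t}
  have hbij : Set.BijOn (f ∘ ·) R R :=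
    (R.toFinite.injOn_iff_bijOn_of_mapsTo fun t ht => hf s t ht).mp hinj.comp_left.injOn
  obtain ⟨t', ht', heq⟩ := hbij.surjOn h
  rwa [hinj.comp_left heq] at ht'

theorem exists_iso_of_injective_hom_of_injective_hom [Finite G] [Finite H]
    {relG : ∀ s : σ, (Fin (ar s) → G) → Prop} {relH : ∀ s : σ, (Fin (ar s) → H) → Prop}
    {f : G → H} {g : H → G} (hf : IsHom relG relH f) (hfi : Injective f)
    (hg : IsHom relH relG g) (hgi : Injective g) :
    ∃ φ : G ≃ H, ∀ s t, relG s t ↔ relH s (φ ∘ t) := by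
  have hbij : Bijective f :=
    hfi.bijective_of_nat_card_le (Nat.card_le_card_of_injective g hgi)
  exact ⟨Equiv.ofBijective f hbij, fun s t =>
    ⟨hf s t, fun h => ((hg.comp hf).rel_iff_of_injective (hgi.comp hfi) s t).mp (hg s _ h)⟩⟩

section Automorphisms

variable (relG : ∀ s : σ, (Fin (ar s) → G) → Prop)

def autSubgroup : Subgroup (Equiv.Perm G) where
  carrier := {φ | ∀ s t, relG s t ↔ relG s (φ ∘ t)}
  one_mem' _ _ := Iff.rfl
  mul_mem' {φ ψ} hφ hψ s t := (hψ s t).trans (hφ s (ψ ∘ t))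
  inv_mem' {φ} hφ s t := by
    simpa [← comp_assoc] using (hφ s (⇑φ⁻¹ ∘ t)).symm

noncomputable def injectiveEndEquivAut [Finite G] :
    {f : G → G // IsHom relG relG f ∧ Injective f} ≃ autSubgroup relG where
  toFun f := ⟨Equiv.ofBijective f.1 (Finite.injective_iff_bijective.mp f.2.2),
    fun s t => (f.2.1.rel_iff_of_injective f.2.2 s t).symm⟩
  invFun φ := ⟨φ.1, fun s t => (φ.2 s t).mp, φ.1.injective⟩
  left_inv _ := rfl
  right_inv _ := Subtype.ext (Equiv.ext fun _ => rfl)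

theorem not_dvd_card_injective_end [Finite G] {p : ℕ} (hp : p.Prime)
    (hrig : ¬ ∃ φ : Equiv.Perm G, (∀ s t, relG s t ↔ relG s (φ ∘ t)) ∧ orderOf φ = p) :
    ¬ p ∣ Nat.card {f : G → G // IsHom relG relG f ∧ Injective f} := by
  rw [Nat.card_congr (injectiveEndEquivAut relG)]
  intro hdvd
  have : Fact p.Prime := ⟨hp⟩
  obtain ⟨φ, hφ⟩ := exists_prime_orderOf_dvd_card' p hdvd
  exact hrig ⟨φ, φ.2, (Subgroup.orderOf_coe φ).trans hφ⟩

end Automorphisms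

instance Setoid.finite [Finite K] : Finite (Setoid K) :=
  Finite.of_injective (fun θ : Setoid K => ⇑θ) fun _ _ h => Setoid.eq_iff_rel_eq.mpr h

theorem Setoid.card_quotient_lt [Finite K] {θ : Setoid K} (hθ : θ ≠ ⊥) :
    Nat.card (Quotient θ) < Nat.card K := by
  refine (Nat.card_le_card_of_surjective _ Quotient.mk_surjective).lt_of_ne fun heq =>
    hθ ?_
  have hinj := (Quotient.mk_surjective.bijective_of_nat_card_le heq.ge).injective
  ext a b
  exact ⟨fun hab => hinj (Quotient.sound hab), fun hab => hab ▸ θ.refl a⟩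

section Counting

variable (relK : ∀ s : σ, (Fin (ar s) → K) → Prop)
  (relG : ∀ s : σ, (Fin (ar s) → G) → Prop)

def quotientRel (θ : Setoid K) : ∀ s : σ, (Fin (ar s) → Quotient θ) → Prop :=
  fun s t => ∃ t₀, relK s t₀ ∧ Quotient.mk θ ∘ t₀ = t

def homWithKerEquivInjectiveHom (θ : Setoid K) :
    {f : K → G // IsHom relK relG f ∧ Setoid.ker f = θ} ≃
      {g : Quotient θ → G // IsHom (quotientRel relK θ) relG g ∧ Injective g} where
  toFun f := ⟨Quotient.lift f.1 fun a b hab => by rw [← f.2.2] at hab; exact hab,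
    by rintro s _ ⟨t, ht, rfl⟩; exact f.2.1 s t ht,
    by rintro ⟨a⟩ ⟨b⟩ hab; exact Quotient.sound (f.2.2 ▸ hab)⟩
  invFun g := ⟨g.1 ∘ Quotient.mk θ, fun s t ht => g.2.1 s _ ⟨t, ht, rfl⟩,
    Setoid.ext fun _ _ =>
      ⟨fun hab => Quotient.exact (g.2.2 hab), fun hab => congrArg g.1 (Quotient.sound hab)⟩⟩
  left_inv _ := rfl
  right_inv g := Subtype.ext <| funext fun x => Quotient.inductionOn x fun _ => rfl

theorem card_hom_eq_sum_card_hom_with_ker [Finite K] [Finite G] [Fintype (Setoid K)] :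
    Nat.card {f : K → G // IsHom relK relG f} =
      ∑ θ : Setoid K, Nat.card {f : K → G // IsHom relK relG f ∧ Setoid.ker f = θ} := by
  rw [← Nat.card_sigma]
  exact Nat.card_congr <|
    (Equiv.sigmaFiberEquiv fun f : {f // IsHom relK relG f} => Setoid.ker f.1).symm.trans
      (Equiv.sigmaCongrRight fun θ =>
        Equiv.subtypeSubtypeEquivSubtypeInter (IsHom relK relG) (Setoid.ker · = θ))

theorem card_hom_with_ker_bot :
    Nat.card {f : K → G // IsHom relK relG f ∧ Setoid.ker f = ⊥} =
      Nat.card {f : K → G // IsHom relK relG f ∧ Injective f} := by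
  simp only [Setoid.injective_iff_ker_bot]

end Counting

theorem card_injective_hom_modEq {p : ℕ} {relG : ∀ s : σ, (Fin (ar s) → G) → Prop}
    {relH : ∀ s : σ, (Fin (ar s) → H) → Prop} [Finite G] [Finite H]
    (hhom : ∀ (K : Type) (_ : Fintype K) (relK : ∀ s : σ, (Fin (ar s) → K) → Prop),
      Nat.card {f : K → G // IsHom relK relG f} ≡
        Nat.card {f : K → H // IsHom relK relH f} [MOD p])
    (K : Type) [Finite K] (relK : ∀ s : σ, (Fin (ar s) → K) → Prop) :
    Nat.card {f : K → G // IsHom relK relG f ∧ Injective f} ≡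
      Nat.card {f : K → H // IsHom relK relH f ∧ Injective f} [MOD p] := by
  induction h : Nat.card K using Nat.strong_induction_on generalizing K with
  | _ n ih =>
  classical
  have := Fintype.ofFinite (Setoid K)
  have hsplit := hhom K (Fintype.ofFinite K) relK
  rw [card_hom_eq_sum_card_hom_with_ker, card_hom_eq_sum_card_hom_with_ker,
    Fintype.sum_eq_add_sum_compl ⊥, Fintype.sum_eq_add_sum_compl ⊥,
    card_hom_with_ker_bot, card_hom_with_ker_bot] at hsplit
  refine Nat.ModEq.add_right_cancel (Nat.ModEq.sum fun θ hθ => ?_) hsplit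
  rw [Nat.card_congr (homWithKerEquivInjectiveHom relK relG θ),
    Nat.card_congr (homWithKerEquivInjectiveHom relK relH θ)]
  have hθ : θ ≠ ⊥ := by simpa using hθ
  exact ih _ (h ▸ Setoid.card_quotient_lt hθ) _ _ rfl

theorem exists_injective_hom_of_forall_card_hom_modEq {G H : Type} [Finite G] [Finite H]
    {p : ℕ} (hp : p.Prime) {relG : ∀ s : σ, (Fin (ar s) → G) → Prop}
    {relH : ∀ s : σ, (Fin (ar s) → H) → Prop}
    (hrig : ¬ ∃ φ : Equiv.Perm G, (∀ s t, relG s t ↔ relG s (φ ∘ t)) ∧ orderOf φ = p)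
    (hhom : ∀ (K : Type) (_ : Fintype K) (relK : ∀ s : σ, (Fin (ar s) → K) → Prop),
      Nat.card {f : K → G // IsHom relK relG f} ≡
        Nat.card {f : K → H // IsHom relK relH f} [MOD p]) :
    ∃ f : G → H, IsHom relG relH f ∧ Injective f := by
  have hmod := card_injective_hom_modEq hhom G relG
  have hne : Nat.card {f : G → H // IsHom relG relH f ∧ Injective f} ≠ 0 := fun h0 =>
    not_dvd_card_injective_end relG hp hrig (Nat.modEq_zero_iff_dvd.mp (h0 ▸ hmod))
  obtain ⟨⟨f, hf⟩⟩ := (Nat.card_ne_zero.mp hne).1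
  exact ⟨f, hf⟩

/-- Lovász-type theorem mod p: two finite `p`-rigid similar
relational structures with the same homomorphism counts mod `p` from every similar
structure are isomorphic. -/
theorem lovasz_mod_p
    (σ : Type) (ar : σ → ℕ) (p : ℕ) (hp : p.Prime)
    (G H : Type) [Fintype G] [Fintype H]
    (relG : ∀ s : σ, (Fin (ar s) → G) → Prop)
    (relH : ∀ s : σ, (Fin (ar s) → H) → Prop)
    (hGrig : ¬ ∃ φ : Equiv.Perm G, (∀ s t, relG s t ↔ relG s (⇑φ ∘ t)) ∧ orderOf φ = p)
    (hHrig : ¬ ∃ φ : Equiv.Perm H, (∀ s t, relH s t ↔ relH s (⇑φ ∘ t)) ∧ orderOf φ = p)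
    (hhom : ∀ (K : Type) (_ : Fintype K) (relK : ∀ s : σ, (Fin (ar s) → K) → Prop),
      Nat.card {f : K → G // ∀ s t, relK s t → relG s (f ∘ t)} ≡
        Nat.card {f : K → H // ∀ s t, relK s t → relH s (f ∘ t)} [MOD p]) :
    ∃ φ : G ≃ H, ∀ s t, relG s t ↔ relH s (⇑φ ∘ t) := by
  obtain ⟨f, hf, hfi⟩ := exists_injective_hom_of_forall_card_hom_modEq hp hGrig hhom
  obtain ⟨g, hg, hgi⟩ := exists_injective_hom_of_forall_card_hom_modEq hp hHrig
    fun K hK relK => (hhom K hK relK).symm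
  exact exists_iso_of_injective_hom_of_injective_hom hf hfi hg hgi
end

section
/- Let H be a directed graph with vertices {a,b,c,d} and edges {(b,a),(b,c),(c,d)}. Then H is rigid (its only automorphism is the identity), but the map π on H² fixing every vertex except swapping (a,d) and (c,d) is a nontrivial automorphism of H² of order 2. -/
/-- the digraph on `{a,b,c,d} = {0,1,2,3}` with edges
`{(b,a),(b,c),(c,d)}` is rigid, but its tensor square has the nontrivial order-2
automorphism swapping `(a,d)` and `(c,d)`. -/
theorem rigid_digraph_square_not_rigid :
    let E : Fin 4 → Fin 4 → Prop := fun u v =>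
      (u = 1 ∧ v = 0) ∨ (u = 1 ∧ v = 2) ∨ (u = 2 ∧ v = 3)
    let E2 : Fin 4 × Fin 4 → Fin 4 × Fin 4 → Prop := fun u v =>
      E u.1 v.1 ∧ E u.2 v.2
    let π : Equiv.Perm (Fin 4 × Fin 4) := Equiv.swap (0, 3) (2, 3)
    (∀ φ : Equiv.Perm (Fin 4), (∀ u v : Fin 4, E (φ u) (φ v) ↔ E u v) → φ = 1) ∧
    π ≠ 1 ∧
    (∀ u v : Fin 4 × Fin 4, E2 (π u) (π v) ↔ E2 u v) ∧
    orderOf π = 2 := by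
  intro E E2 π
  refine ⟨by decide, by decide, by decide, ?_⟩
  exact orderOf_eq_prime (Equiv.swap_mul_self _ _) (by decide)
end
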